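/- Non-existence of a type-only encoding of simple record subtyping as row polymorphism: there is no global, compositional, type-only translation from λ_{[]}^{≤} (records with width subtyping) to λ_{[]}^{ρ} (records with row polymorphism) that preserves typing. In particular, any type-only translation forces ⟦[]⟧ = Λᾱ.[] of type ∀ᾱ.[] and ⟦[ℓ=y] ▷ []⟧ of type ∀γ̄.[ℓ : ∀δ̄.α₀] (under Δ = α₀, Γ = y:α₀), and these two types cannot be equal since row polymorphism cannot remove the label ℓ. -/

import Mathlib

namespace Stmt10

abbrev Label := ℕ

/-- Types of λ_{[]}^{≤}: base type variables, functions, record types over rows. -/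
inductive Ty : Type where
  | tvar : ℕ → Ty
  | arrow : Ty → Ty → Ty
  | record : List (Label × Ty) → Ty

/-- Simple (width) record subtyping on rows:
dom(R') ⊆ dom(R) and R|_{dom R'} = R'. -/
def RSub (R R' : List (Label × Ty)) : Prop :=
  ∀ ℓ A, List.lookup ℓ R' = some A → List.lookup ℓ R = some A

/-- Subtyping on types of λ_{[]}^{≤}: only the shallow record rule. -/
inductive Sub : Ty → Ty → Prop where
  | record {R R'} : RSub R R' → Sub (.record R) (.record R')

/-- Terms, de Bruijn indices.  `upcast M B` is the upcast M ▷ B. -/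
inductive Tm : Type where
  | var : ℕ → Tm
  | lam : Ty → Tm → Tm
  | app : Tm → Tm → Tm
  | record : List (Label × Tm) → Tm
  | proj : Tm → Label → Tm
  | upcast : Tm → Ty → Tm

mutual
/-- Shift de Bruijn indices ≥ c up by one. -/
def shiftTm (c : ℕ) : Tm → Tm
  | .var n => if n < c then .var n else .var (n + 1)
  | .lam A M => .lam A (shiftTm (c + 1) M)
  | .app M N => .app (shiftTm c M) (shiftTm c N)
  | .record es => .record (shiftEs c es)
  | .proj M ℓ => .proj (shiftTm c M) ℓ
  | .upcast M A => .upcast (shiftTm c M) A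
def shiftEs (c : ℕ) : List (Label × Tm) → List (Label × Tm)
  | [] => []
  | (ℓ, M) :: es => (ℓ, shiftTm c M) :: shiftEs c es
end

mutual
/-- Capture-avoiding substitution of N for de Bruijn index k. -/
def substTm (k : ℕ) (N : Tm) : Tm → Tm
  | .var n => if n = k then N else if n < k then .var n else .var (n - 1)
  | .lam A M => .lam A (substTm (k + 1) (shiftTm 0 N) M)
  | .app M₁ M₂ => .app (substTm k N M₁) (substTm k N M₂)
  | .record es => .record (substEs k N es)
  | .proj M ℓ => .proj (substTm k N M) ℓ
  | .upcast M A => .upcast (substTm k N M) A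
def substEs (k : ℕ) (N : Tm) : List (Label × Tm) → List (Label × Tm)
  | [] => []
  | (ℓ, M) :: es => (ℓ, substTm k N M) :: substEs k N es
end

/-- Typing of λ_{[]}^{≤}. -/
inductive HasTy : List Ty → Tm → Ty → Prop where
  | var {Γ n A} : Γ[n]? = some A → HasTy Γ (.var n) A
  | lam {Γ A B M} : HasTy (A :: Γ) M B → HasTy Γ (.lam A M) (.arrow A B)
  | app {Γ A B M N} : HasTy Γ M (.arrow A B) → HasTy Γ N A → HasTy Γ (.app M N) B
  | record {Γ} {es : List (Label × Tm)} {R : List (Label × Ty)} :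
      es.map Prod.fst = R.map Prod.fst →
      (∀ (i : ℕ) p q, es[i]? = some p → R[i]? = some q → HasTy Γ (Prod.snd p) (Prod.snd q)) →
      HasTy Γ (.record es) (.record R)
  | proj {Γ R M ℓ A} : HasTy Γ M (.record R) → List.lookup ℓ R = some A →
      HasTy Γ (.proj M ℓ) A
  | upcast {Γ R R' M} : HasTy Γ M (.record R) → RSub R R' →
      HasTy Γ (.upcast M (.record R')) (.record R')


/-! ### Typing derivations of λ_{[]}^{≤} as data. -/

mutual
inductive Deriv : List Ty → Tm → Ty → Type where
  | var {Γ n A} : Γ[n]? = some A → Deriv Γ (.var n) A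
  | lam {Γ A B M} : Deriv (A :: Γ) M B → Deriv Γ (.lam A M) (.arrow A B)
  | app {Γ A B M N} : Deriv Γ M (.arrow A B) → Deriv Γ N A → Deriv Γ (.app M N) B
  | record {Γ es R} : DerivRow Γ es R → Deriv Γ (.record es) (.record R)
  | proj {Γ R M ℓ A} : Deriv Γ M (.record R) → List.lookup ℓ R = some A →
      Deriv Γ (.proj M ℓ) A
  | upcast {Γ R R' M} : Deriv Γ M (.record R) → RSub R R' →
      Deriv Γ (.upcast M (.record R')) (.record R')
inductive DerivRow : List Ty → List (Label × Tm) → List (Label × Ty) → Type where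
  | nil {Γ} : DerivRow Γ [] []
  | cons {Γ ℓ M A es R} : Deriv Γ M A → DerivRow Γ es R →
      DerivRow Γ ((ℓ, M) :: es) ((ℓ, A) :: R)
end

/-! ### The target calculus λ_{[]}^{ρ}: records with row polymorphism. -/

/-- Target types: record rows have an optional row-variable tail (de Bruijn);
`rall L A` is ∀ρ^{Row_L}.A. -/
inductive RTy : Type where
  | tvar : ℕ → RTy
  | arrow : RTy → RTy → RTy
  | record : List (Label × RTy) → Option ℕ → RTy
  | rall : List Label → RTy → RTy

abbrev RRow := List (Label × RTy) × Option ℕ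

mutual
def shiftRTy (c : ℕ) : RTy → RTy
  | .tvar n => .tvar n
  | .arrow A B => .arrow (shiftRTy c A) (shiftRTy c B)
  | .record es r =>
      .record (shiftREs c es) (r.map (fun n => if n < c then n else n + 1))
  | .rall L A => .rall L (shiftRTy (c + 1) A)
def shiftREs (c : ℕ) : List (Label × RTy) → List (Label × RTy)
  | [] => []
  | (ℓ, A) :: es => (ℓ, shiftRTy c A) :: shiftREs c es
end

def shiftRRow (c : ℕ) (R : RRow) : RRow :=
  (shiftREs c R.1, R.2.map (fun n => if n < c then n else n + 1))

mutual
def substRTy (k : ℕ) (R : RRow) : RTy → RTy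
  | .tvar n => .tvar n
  | .arrow A B => .arrow (substRTy k R A) (substRTy k R B)
  | .record es r =>
      let es' := substREs k R es
      match r with
      | none => .record es' none
      | some n =>
        if n = k then .record (es' ++ R.1) R.2
        else if n < k then .record es' (some n)
        else .record es' (some (n - 1))
  | .rall L A => .rall L (substRTy (k + 1) (shiftRRow 0 R) A)
def substREs (k : ℕ) (R : RRow) : List (Label × RTy) → List (Label × RTy)
  | [] => []
  | (ℓ, A) :: es => (ℓ, substRTy k R A) :: substREs k R es
end

/-- Type equivalence: rows identified up to reordering of labels. -/
inductive REquiv : RTy → RTy → Prop where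
  | refl (A) : REquiv A A
  | symm {A B} : REquiv A B → REquiv B A
  | trans {A B C} : REquiv A B → REquiv B C → REquiv A C
  | arrow {A A' B B'} : REquiv A A' → REquiv B B' → REquiv (.arrow A B) (.arrow A' B')
  | rall {L A A'} : REquiv A A' → REquiv (.rall L A) (.rall L A')
  | recordCongr {es es' r} :
      es.map Prod.fst = es'.map Prod.fst →
      (∀ (i : ℕ) p q, es[i]? = some p → es'[i]? = some q →
        REquiv (Prod.snd p) (Prod.snd q)) →
      REquiv (.record es r) (.record es' r)
  | recordPerm {es es' r} : List.Perm es es' →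
      REquiv (.record es r) (.record es' r)

/-- Target terms. -/
inductive RTm : Type where
  | var : ℕ → RTm
  | lam : RTy → RTm → RTm
  | app : RTm → RTm → RTm
  | record : List (Label × RTm) → RTm
  | proj : RTm → Label → RTm
  | rlam : List Label → RTm → RTm
  | rapp : RTm → RRow → RTm

/-- Typing of λ_{[]}^{ρ}. -/
inductive RHasTy : List RTy → RTm → RTy → Prop where
  | var {Γ n A} : Γ[n]? = some A → RHasTy Γ (.var n) A
  | lam {Γ A B M} : RHasTy (A :: Γ) M B → RHasTy Γ (.lam A M) (.arrow A B)
  | app {Γ A B M N} : RHasTy Γ M (.arrow A B) → RHasTy Γ N A → RHasTy Γ (.app M N) B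
  | record {Γ} {es : List (Label × RTm)} {res : List (Label × RTy)} :
      es.map Prod.fst = res.map Prod.fst →
      (∀ (i : ℕ) p q, es[i]? = some p → res[i]? = some q →
        RHasTy Γ (Prod.snd p) (Prod.snd q)) →
      RHasTy Γ (.record es) (.record res none)
  | proj {Γ es r M ℓ A} : RHasTy Γ M (.record es r) → List.lookup ℓ es = some A →
      RHasTy Γ (.proj M ℓ) A
  | rlam {Γ L M A} : RHasTy (Γ.map (shiftRTy 0)) M A →
      RHasTy Γ (.rlam L M) (.rall L A)
  | rapp {Γ L M A R} : RHasTy Γ M (.rall L A) →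
      RHasTy Γ (.rapp M R) (substRTy 0 R A)
  | conv {Γ M A A'} : RHasTy Γ M A → REquiv A A' → RHasTy Γ M A'

/-! ### Untyped terms and erasure. -/

/-- Untyped λ_{[]} terms. -/
inductive UTm : Type where
  | var : ℕ → UTm
  | lam : UTm → UTm
  | app : UTm → UTm → UTm
  | record : List (Label × UTm) → UTm
  | proj : UTm → Label → UTm

mutual
/-- Erasure of source terms: drop upcasts and type annotations. -/
def eraseS : Tm → UTm
  | .var n => .var n
  | .lam _ M => .lam (eraseS M)
  | .app M N => .app (eraseS M) (eraseS N)
  | .record es => .record (eraseSEs es)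
  | .proj M ℓ => .proj (eraseS M) ℓ
  | .upcast M _ => eraseS M
def eraseSEs : List (Label × Tm) → List (Label × UTm)
  | [] => []
  | (ℓ, M) :: es => (ℓ, eraseS M) :: eraseSEs es
end

mutual
/-- Erasure of target terms: drop row abstractions, row applications and
type annotations. -/
def eraseR : RTm → UTm
  | .var n => .var n
  | .lam _ M => .lam (eraseR M)
  | .app M N => .app (eraseR M) (eraseR N)
  | .record es => .record (eraseREs es)
  | .proj M ℓ => .proj (eraseR M) ℓ
  | .rlam _ M => eraseR M
  | .rapp M _ => eraseR M
def eraseREs : List (Label × RTm) → List (Label × UTm)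
  | [] => []
  | (ℓ, M) :: es => (ℓ, eraseR M) :: eraseREs es
end

/-!
Instantiating a row variable can only extend a row at its tail, so a record type without a
tail, possibly below row quantifiers, keeps its labels under row application, and also under
type equivalence. A target term erasing to a record literal therefore has a type of this
shape, carrying exactly the labels of the literal. A type-only translation of `[]` erases to
`[]`, and one of `[ℓ = y] ▷ []` erases to `[ℓ = y]`, yet both must have type `⟦[]⟧`, which
cannot carry both no label and the label `ℓ`.
-/

theorem map_fst_substREs (k : ℕ) (R : RRow) (es : List (Label × RTy)) :
    (substREs k R es).map Prod.fst = es.map Prod.fst := by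
  induction es with
  | nil => rfl
  | cons p es ih => simp [substREs, ih]

theorem map_fst_eraseREs (es : List (Label × RTm)) :
    (eraseREs es).map Prod.fst = es.map Prod.fst := by
  induction es with
  | nil => rfl
  | cons p es ih => simp [eraseREs, ih]

def ClosedHead (ls : List Label) : RTy → Prop
  | .record es r => r = none ∧ (es.map Prod.fst).Perm ls
  | .rall _ A => ClosedHead ls A
  | _ => False

theorem ClosedHead.subst {ls : List Label} :
    ∀ {A : RTy} (k : ℕ) (R : RRow), ClosedHead ls A → ClosedHead ls (substRTy k R A)
  | .record _ none, _, _, h => by simpa [substRTy, ClosedHead, map_fst_substREs] using h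
  | .record _ (some _), _, _, h => nomatch h.1
  | .rall _ _, k, R, h => ClosedHead.subst (k + 1) (shiftRRow 0 R) h
  | .tvar _, _, _, h => h.elim
  | .arrow _ _, _, _, h => h.elim

theorem REquiv.closedHead_iff {A B : RTy} (h : REquiv A B) (ls : List Label) :
    ClosedHead ls A ↔ ClosedHead ls B := by
  induction h with
  | refl => rfl
  | symm _ ih => exact ih.symm
  | trans _ _ ih₁ ih₂ => exact ih₁.trans ih₂
  | arrow => exact Iff.rfl
  | rall _ ih => exact ih
  | recordCongr hlabels => simp only [ClosedHead, hlabels]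
  | recordPerm hperm =>
      have hlabels := hperm.map Prod.fst
      exact and_congr_right fun _ => ⟨hlabels.symm.trans, hlabels.trans⟩

theorem RHasTy.closedHead_of_eraseR_eq_record {Γ : List RTy} {N : RTm} {T : RTy}
    (h : RHasTy Γ N T) {es : List (Label × UTm)} (hN : eraseR N = .record es) :
    ClosedHead (es.map Prod.fst) T := by
  induction h generalizing es with
  | record hlabels _ =>
      simp only [eraseR, UTm.record.injEq] at hN
      subst hN
      exact ⟨rfl, by rw [map_fst_eraseREs, hlabels]⟩
  | rlam _ ih => exact ih hN
  | rapp _ ih => exact ClosedHead.subst 0 _ (ih hN)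
  | conv _ hequiv ih => exact (hequiv.closedHead_iff _).1 (ih hN)
  | var | lam | app | proj => simp [eraseR] at hN

theorem ClosedHead.perm {ls ls' : List Label} :
    ∀ {T : RTy}, ClosedHead ls T → ClosedHead ls' T → ls.Perm ls'
  | .record _ _, h, h' => h.2.symm.trans h'.2
  | .rall _ T, h, h' => ClosedHead.perm (T := T) h h'
  | .tvar _, h, _ => h.elim
  | .arrow _ _, h, _ => h.elim

theorem no_type_only_encoding :
    ¬ ∃ (trTy : Ty → RTy)
        (trD : ∀ (Γ : List Ty) (M : Tm) (A : Ty), Deriv Γ M A → RTm),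
      (∀ Γ M A (d : Deriv Γ M A), RHasTy (Γ.map trTy) (trD Γ M A d) (trTy A)) ∧
      (∀ Γ M A (d : Deriv Γ M A), eraseR (trD Γ M A d) = eraseS M) := by
  rintro ⟨trTy, trD, htyped, herase⟩
  have hforget : RSub [(0, .tvar 0)] [] := fun _ _ h => nomatch h
  let empty : Deriv [.tvar 0] (.record []) (.record []) := .record .nil
  let upcast : Deriv [.tvar 0] (.upcast (.record [(0, .var 0)]) (.record [])) (.record []) :=
    .upcast (.record (.cons (.var rfl) .nil)) hforget
  have hempty := (htyped _ _ _ empty).closedHead_of_eraseR_eq_record (herase _ _ _ empty)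
  have hlabel := (htyped _ _ _ upcast).closedHead_of_eraseR_eq_record (herase _ _ _ upcast)
  simpa [eraseSEs] using hempty.perm hlabel

end Stmt10
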